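/- arXiv:1802.07971 — 4 statements merged into one kernel-verified Lean document; each statement's English description precedes it below -/
import Mathlib

section
/- Let f(x) = wᵀx + b be a linear classifier on ℝᵈ with w ≠ 0, let ε ∈ (0, 1/3), and let v ~ N(0, Σ) with Σ positive definite. If |α| < (1/√(2·ln(1/ε))) · (‖w‖₂/‖√Σ w‖₂) · dist₂(x, H), where dist₂(x, H) = |f(x)|/‖w‖₂ is the Euclidean distance from x to the hyperplane H = {z : f(z) = 0}, then P(sign(f(x + αv)) ≠ sign(f(x))) < ε (assuming f(x) ≠ 0). -/
open MeasureTheory ProbabilityTheory Matrix Finset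

section OldSqrt

open scoped ComplexOrder

/-- The positive semidefinite square root of a positive semidefinite matrix
(the definition removed from Mathlib, restored with its old meaning). -/
noncomputable def Matrix.PosSemidef.sqrt {n 𝕜 : Type*} [Fintype n] [DecidableEq n] [RCLike 𝕜]
    {A : Matrix n n 𝕜} (hA : A.PosSemidef) : Matrix n n 𝕜 :=
  (hA.1.eigenvectorUnitary : Matrix n n 𝕜) *
    diagonal ((fun r : ℝ => (r : 𝕜)) ∘ (√·) ∘ hA.1.eigenvalues) *
    (star hA.1.eigenvectorUnitary : Matrix n n 𝕜)

end OldSqrt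

/-!
With `c = f(x)` and `u = √Σ w`, symmetry of `√Σ` gives `f(x + α √Σ g) = c + α ⟪u, g⟫`, so the
sign of `f` can only change when the centred Gaussian `⟪-cα u, g⟫`, of variance `c²α²‖u‖²`,
exceeds `c²`. The Chernoff bound `exp (-s² / (2σ²))` on that tail is below `ε` as soon as
`2 α² ‖u‖² ln (1/ε) < c²`, which is the hypothesis on `|α|` once the two factors `‖w‖` cancel.
-/

open Real
open scoped NNReal

open scoped ComplexOrder in
lemma Matrix.PosSemidef.isHermitian_sqrt {n 𝕜 : Type*} [Fintype n] [DecidableEq n] [RCLike 𝕜]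
    {A : Matrix n n 𝕜} (hA : A.PosSemidef) : hA.sqrt.IsHermitian := by
  rw [Matrix.IsHermitian, Matrix.PosSemidef.sqrt, conjTranspose_mul, conjTranspose_mul,
    star_eq_conjTranspose, conjTranspose_conjTranspose, diagonal_conjTranspose, Matrix.mul_assoc]
  congr 3
  ext i
  simp

lemma Matrix.PosSemidef.dotProduct_sqrt_mulVec {n : Type*} [Fintype n] [DecidableEq n]
    {A : Matrix n n ℝ} (hA : A.PosSemidef) (v w : n → ℝ) :
    v ⬝ᵥ hA.sqrt *ᵥ w = hA.sqrt *ᵥ v ⬝ᵥ w := by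
  have hsymm : hA.sqrtᵀ = hA.sqrt := by
    simpa [Matrix.IsHermitian, conjTranspose_eq_transpose_of_trivial] using hA.isHermitian_sqrt
  rw [dotProduct_mulVec, ← vecMul_transpose, hsymm]

lemma sq_mul_mul_lt_sq_of_abs_lt {α c p q r : ℝ} (hp : 0 ≤ p) (hq : 0 ≤ q)
    (h : |α| < 1 / p * (r / q) * (|c| / r)) : (α * p * q) ^ 2 < c ^ 2 := by
  have hpos : 0 < 1 / p * (r / q) * (|c| / r) := (abs_nonneg α).trans_lt h
  have hp0 : p ≠ 0 := by rintro rfl; simp at hpos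
  have hq0 : q ≠ 0 := by rintro rfl; simp at hpos
  have hr0 : r ≠ 0 := by rintro rfl; simp at hpos
  have hlt : |α * p * q| < |c| := by
    rw [abs_mul, abs_mul, abs_of_nonneg hp, abs_of_nonneg hq]
    rwa [show 1 / p * (r / q) * (|c| / r) = |c| / (p * q) by field_simp,
      lt_div_iff₀ (by positivity), ← mul_assoc] at h
  exact sq_lt_sq.2 hlt

lemma gaussianReal_Ici_add_le_exp (m : ℝ) (v : ℝ≥0) {s : ℝ} (hs : 0 ≤ s) :
    gaussianReal m v (Set.Ici (m + s)) ≤ ENNReal.ofReal (exp (-s ^ 2 / (2 * v))) := by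
  have hchernoff := measure_ge_le_exp_mul_mgf (μ := gaussianReal m v) (X := id) (m + s)
    (t := s / v) (by positivity) (integrable_exp_mul_gaussianReal _)
  simp only [mgf_id_gaussianReal, ← exp_add] at hchernoff
  rw [← ofReal_measureReal]
  refine ENNReal.ofReal_le_ofReal (hchernoff.trans_eq (congrArg exp ?_))
  rcases eq_or_ne (v : ℝ) 0 with hv | hv
  · simp [hv]
  · field_simp
    ring

lemma gaussianReal_Ici_lt_ofReal {v : ℝ≥0} {s ε : ℝ} (hs : 0 < s) (hε : 0 < ε)
    (h : 2 * v * log (1 / ε) < s ^ 2) : gaussianReal 0 v (Set.Ici s) < ENNReal.ofReal ε := by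
  rcases eq_or_ne v 0 with rfl | hv
  · simpa [hs.not_ge] using hε
  have hexp : exp (-s ^ 2 / (2 * v)) < ε := by
    rw [← exp_log hε, exp_lt_exp, div_lt_iff₀ (by positivity)]
    rw [one_div, log_inv] at h
    linarith
  calc gaussianReal 0 v (Set.Ici s) = gaussianReal 0 v (Set.Ici (0 + s)) := by rw [zero_add]
    _ ≤ ENNReal.ofReal (exp (-s ^ 2 / (2 * v))) := gaussianReal_Ici_add_le_exp 0 v hs.le
    _ < ENNReal.ofReal ε := (ENNReal.ofReal_lt_ofReal_iff hε).2 hexp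

lemma map_pi_gaussianReal_dotProduct {ι : Type*} [Fintype ι] (a : ι → ℝ) :
    (Measure.pi fun _ : ι => gaussianReal 0 1).map (a ⬝ᵥ ·)
      = gaussianReal 0 (∑ i, a i ^ 2).toNNReal := by
  have hcomp : (a ⬝ᵥ ·) = innerSL ℝ (WithLp.toLp 2 a) ∘ WithLp.toLp 2 := by
    ext g
    simp [EuclideanSpace.inner_toLp_toLp, dotProduct_comm]
  rw [hcomp, ← Measure.map_map (by fun_prop) (by fun_prop), map_pi_eq_stdGaussian,
    IsGaussian.map_eq_gaussianReal, integral_strongDual_stdGaussian, variance_dual_stdGaussian,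
    innerSL_apply_norm, EuclideanSpace.real_norm_sq_eq]

lemma measure_pi_gaussianReal_le_dotProduct_lt_ofReal {ι : Type*} [Fintype ι] (a : ι → ℝ)
    {s ε : ℝ} (hs : 0 < s) (hε : 0 < ε) (h : 2 * (∑ i, a i ^ 2) * log (1 / ε) < s ^ 2) :
    (Measure.pi fun _ : ι => gaussianReal 0 1) {g | s ≤ a ⬝ᵥ g} < ENNReal.ofReal ε := by
  have hset : {g : ι → ℝ | s ≤ a ⬝ᵥ g} = (a ⬝ᵥ ·) ⁻¹' Set.Ici s := rfl
  rw [hset, ← Measure.map_apply (by fun_prop) measurableSet_Ici, map_pi_gaussianReal_dotProduct]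
  refine gaussianReal_Ici_lt_ofReal hs hε ?_
  rwa [Real.coe_toNNReal _ (by positivity)]

theorem gaussian_noise_robustness_lower_general (d : ℕ) (w : Fin d → ℝ) (b : ℝ)
    (x : Fin d → ℝ) (ε : ℝ) (hε : ε ∈ Set.Ioo (0 : ℝ) (1 / 3))
    (S : Matrix (Fin d) (Fin d) ℝ) (hS : S.PosDef) (α : ℝ)
    (hα : |α| < (1 / Real.sqrt (2 * Real.log (1 / ε)))
        * (Real.sqrt (∑ i, w i ^ 2)
            / Real.sqrt (∑ i, (hS.posSemidef.sqrt.mulVec w) i ^ 2))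
        * (|w ⬝ᵥ x + b| / Real.sqrt (∑ i, w i ^ 2))) :
    (Measure.pi fun _ : Fin d => gaussianReal 0 1)
        {g | (w ⬝ᵥ x + b) * (w ⬝ᵥ (x + α • hS.posSemidef.sqrt.mulVec g) + b) ≤ 0}
      < ENNReal.ofReal ε := by
  set M := hS.posSemidef.sqrt
  set c := w ⬝ᵥ x + b with hc_def
  set u := M *ᵥ w
  have hlog : 0 < log (1 / ε) :=
    log_pos ((one_lt_div hε.1).2 (hε.2.trans (by norm_num)))
  have hαc : α ^ 2 * (2 * log (1 / ε)) * ∑ i, u i ^ 2 < c ^ 2 := by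
    have h := sq_mul_mul_lt_sq_of_abs_lt (sqrt_nonneg _) (sqrt_nonneg _) hα
    rwa [mul_pow, mul_pow, sq_sqrt (by positivity), sq_sqrt (by positivity)] at h
  have hc_sq : 0 < c ^ 2 := lt_of_le_of_lt (by positivity) hαc
  have hf : ∀ g, w ⬝ᵥ (x + α • M *ᵥ g) + b = c + α * (u ⬝ᵥ g) := fun g => by
    rw [dotProduct_add, dotProduct_smul, hS.posSemidef.dotProduct_sqrt_mulVec, smul_eq_mul, hc_def]
    ring
  have hsub : {g | c * (w ⬝ᵥ (x + α • M *ᵥ g) + b) ≤ 0}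
      ⊆ {g | c ^ 2 ≤ (-(c * α) • u) ⬝ᵥ g} := by
    intro g hg
    simp only [Set.mem_ofPred_eq, hf, smul_dotProduct, smul_eq_mul] at hg ⊢
    linear_combination hg
  refine (measure_mono hsub).trans_lt
    (measure_pi_gaussianReal_le_dotProduct_lt_ofReal _ hc_sq hε.1 ?_)
  simp only [Pi.smul_apply, smul_eq_mul, mul_pow, ← Finset.mul_sum]
  linear_combination mul_lt_mul_of_pos_left hαc hc_sq

/-- Gaussian-noise robustness, lower bound: for a linear classifier `f(z) = wᵀz + b` and
Gaussian noise `v = √Σ g` with `g` i.i.d. standard Gaussian, if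
`|α| < √(1/(2 ln(1/ε))) · (‖w‖₂/‖√Σ w‖₂) · dist₂(x, H)` then the probability that the
sign of `f` changes is `< ε`. -/
theorem gaussian_noise_robustness_lower (d : ℕ) (w : Fin d → ℝ) (hw : w ≠ 0) (b : ℝ)
    (x : Fin d → ℝ) (hfx : w ⬝ᵥ x + b ≠ 0) (ε : ℝ) (hε : ε ∈ Set.Ioo (0 : ℝ) (1 / 3))
    (S : Matrix (Fin d) (Fin d) ℝ) (hS : S.PosDef) (α : ℝ)
    (hα : |α| < (1 / Real.sqrt (2 * Real.log (1 / ε)))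
        * (Real.sqrt (∑ i, w i ^ 2)
            / Real.sqrt (∑ i, (hS.posSemidef.sqrt.mulVec w) i ^ 2))
        * (|w ⬝ᵥ x + b| / Real.sqrt (∑ i, w i ^ 2))) :
    (Measure.pi fun _ : Fin d => gaussianReal 0 1)
        {g | (w ⬝ᵥ x + b) * (w ⬝ᵥ (x + α • hS.posSemidef.sqrt.mulVec g) + b) ≤ 0}
      < ENNReal.ofReal ε :=
  gaussian_noise_robustness_lower_general d w b x ε hε S hS α hα
end

section
/- Let f(x) = wᵀx + b be a linear classifier on ℝᵈ with w ≠ 0, f(x) ≠ 0, let ε ∈ (0, 1/3), and v ~ N(0, Σ) with Σ positive definite. If |α| > (1/√(1-√(3ε))) · (‖w‖₂/‖√Σ w‖₂) · |f(x)|/‖w‖₂, then P(f(x)·f(x+αv) ≤ 0) > ε. -/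
open MeasureTheory ProbabilityTheory Matrix Finset
open scoped MatrixOrder NNReal ENNReal Real

/-!
Since `f (x + α • √Σ g) = f x + α ⟪√Σ w, g⟫`, a sign change is the half-space event
`f(x)² ≤ ⟪-(f(x) α) • √Σ w, g⟫`, and `⟪u, g⟫ ~ N(0, ‖u‖²)` for standard Gaussian `g`.
The Gaussian density is at most `1 / (s √(2π))`, hence
`P(N(0, s²) ≥ t) ≥ 1/2 - t / (s √(2π))`. The hypothesis on `|α|` makes
`t / s < √(1 - √(3ε))`, and the elementary inequality `√(1 - √(3ε)) ≤ √(2π) (1/2 - ε)`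
finishes the proof.
-/

lemma sum_sq_pos_of_ne_zero {ι : Type*} [Fintype ι] {u : ι → ℝ} (hu : u ≠ 0) :
    0 < ∑ i, u i ^ 2 := by
  have huu : u ⬝ᵥ u ≠ 0 := mt dotProduct_self_eq_zero.1 hu
  simp only [dotProduct, ← sq] at huu
  exact lt_of_le_of_ne (by positivity) huu.symm

lemma sqrt_sum_sq_smul {ι : Type*} [Fintype ι] (k : ℝ) (u : ι → ℝ) :
    √(∑ i, (k • u) i ^ 2) = |k| * √(∑ i, u i ^ 2) := by
  simp only [Pi.smul_apply, smul_eq_mul, mul_pow, ← mul_sum]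
  rw [Real.sqrt_mul (sq_nonneg k), Real.sqrt_sq_eq_abs]

namespace ProbabilityTheory

lemma map_pi_gaussianReal_dotProduct {ι : Type*} [Fintype ι] (u : ι → ℝ) :
    (Measure.pi fun _ : ι ↦ gaussianReal 0 1).map (u ⬝ᵥ ·)
      = gaussianReal 0 (∑ i, u i ^ 2).toNNReal := by
  have hinner : (u ⬝ᵥ ·) = innerSL ℝ (WithLp.toLp 2 u) ∘ WithLp.toLp 2 := by
    ext g
    simp [EuclideanSpace.inner_eq_star_dotProduct, dotProduct_comm]
  rw [hinner, ← Measure.map_map (by fun_prop) (by fun_prop), map_pi_eq_stdGaussian,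
    IsGaussian.map_eq_gaussianReal, integral_strongDual_stdGaussian, variance_dual_stdGaussian,
    innerSL_apply_norm, EuclideanSpace.real_norm_sq_eq]

lemma gaussianPDFReal_le_inv_sqrt (μ : ℝ) (v : ℝ≥0) (x : ℝ) :
    gaussianPDFReal μ v x ≤ (√(2 * π * v))⁻¹ := by
  rw [gaussianPDFReal_def]
  refine mul_le_of_le_one_right (by positivity) (Real.exp_le_one_iff.2 ?_)
  exact div_nonpos_of_nonpos_of_nonneg (neg_nonpos.2 (sq_nonneg _)) (by positivity)

lemma gaussianReal_le_mul_volume (μ : ℝ) {v : ℝ≥0} (hv : v ≠ 0) (s : Set ℝ) :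
    gaussianReal μ v s ≤ ENNReal.ofReal (√(2 * π * v))⁻¹ * volume s := by
  rw [gaussianReal_apply μ hv, ← setLIntegral_const]
  exact lintegral_mono fun x ↦ ENNReal.ofReal_le_ofReal (gaussianPDFReal_le_inv_sqrt μ v x)

lemma gaussianReal_Ici_zero {v : ℝ≥0} (hv : v ≠ 0) :
    gaussianReal 0 v (Set.Ici 0) = 2⁻¹ := by
  have := nullSingletonClass_gaussianReal (μ := 0) hv
  have hsymm : gaussianReal 0 v (Set.Iio 0) = gaussianReal 0 v (Set.Ici 0) := by
    have hneg : Set.Iic (0 : ℝ) = (fun x ↦ -x) ⁻¹' Set.Ici 0 := by ext; simp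
    rw [measure_congr Iio_ae_eq_Iic, hneg, ← Measure.map_apply measurable_neg measurableSet_Ici,
      gaussianReal_map_neg, neg_zero]
  have hsum := prob_add_prob_compl (μ := gaussianReal 0 v) (measurableSet_Ici (a := (0 : ℝ)))
  rw [Set.compl_Ici, hsymm, ← two_mul] at hsum
  exact ENNReal.eq_inv_of_mul_eq_one_left (by rwa [mul_comm])

lemma ofReal_sub_le_gaussianReal_Ici {v : ℝ≥0} (hv : v ≠ 0) {t : ℝ} (ht : 0 ≤ t) :
    ENNReal.ofReal (2⁻¹ - t / √(2 * π * v)) ≤ gaussianReal 0 v (Set.Ici t) := by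
  have hIco : gaussianReal 0 v (Set.Ico 0 t) ≤ ENNReal.ofReal (t / √(2 * π * v)) := by
    calc gaussianReal 0 v (Set.Ico 0 t)
        ≤ ENNReal.ofReal (√(2 * π * v))⁻¹ * volume (Set.Ico 0 t) :=
          gaussianReal_le_mul_volume 0 hv _
      _ = ENNReal.ofReal (t / √(2 * π * v)) := by
          rw [Real.volume_Ico, sub_zero, ← ENNReal.ofReal_mul (by positivity), inv_mul_eq_div]
  have hsplit :
      (2⁻¹ : ℝ≥0∞) ≤ gaussianReal 0 v (Set.Ico 0 t) + gaussianReal 0 v (Set.Ici t) := by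
    rw [← gaussianReal_Ici_zero hv, ← Set.Ico_union_Ici_eq_Ici ht]
    exact measure_union_le _ _
  rw [ENNReal.ofReal_sub _ (by positivity), ENNReal.ofReal_inv_of_pos two_pos,
    ENNReal.ofReal_ofNat]
  exact tsub_le_iff_left.2 (hsplit.trans (add_le_add_left hIco _))

lemma ofReal_sub_le_pi_gaussianReal_setOf_le_dotProduct {ι : Type*} [Fintype ι] {u : ι → ℝ}
    (hu : u ≠ 0) {t : ℝ} (ht : 0 ≤ t) :
    ENNReal.ofReal (2⁻¹ - t / (√(2 * π) * √(∑ i, u i ^ 2)))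
      ≤ (Measure.pi fun _ : ι ↦ gaussianReal 0 1) {g | t ≤ u ⬝ᵥ g} := by
  have hvar : 0 < ∑ i, u i ^ 2 := sum_sq_pos_of_ne_zero hu
  rw [show {g | t ≤ u ⬝ᵥ g} = (u ⬝ᵥ ·) ⁻¹' Set.Ici t from rfl,
    ← Measure.map_apply (by fun_prop) measurableSet_Ici, map_pi_gaussianReal_dotProduct]
  convert ofReal_sub_le_gaussianReal_Ici (Real.toNNReal_pos.2 hvar).ne' ht using 3
  rw [Real.coe_toNNReal _ hvar.le, Real.sqrt_mul (by positivity : (0 : ℝ) ≤ 2 * π)]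

end ProbabilityTheory

lemma sqrt_one_sub_sqrt_three_mul_div_le {ε : ℝ} (h0 : 0 ≤ ε) (h1 : ε ≤ 1 / 2) :
    √(1 - √(3 * ε)) / √(2 * π) ≤ 1 / 2 - ε := by
  obtain ⟨s, hs0, rfl⟩ : ∃ s : ℝ, 0 ≤ s ∧ ε = s ^ 2 / 3 :=
    ⟨√(3 * ε), Real.sqrt_nonneg _, by rw [Real.sq_sqrt (by positivity)]; ring⟩
  have hs : √(3 * (s ^ 2 / 3)) = s := by rw [mul_div_cancel₀ _ three_ne_zero, Real.sqrt_sq hs0]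
  have hquartic : 1 - s ≤ 6 * (1 / 2 - s ^ 2 / 3) ^ 2 := by
    nlinarith [sq_nonneg (s - 1), sq_nonneg (s ^ 2 - 1), mul_nonneg hs0 (sq_nonneg (s - 1))]
  rw [div_le_iff₀ (by positivity), hs]
  calc √(1 - s) ≤ √(2 * π * (1 / 2 - s ^ 2 / 3) ^ 2) :=
        Real.sqrt_le_sqrt <| hquartic.trans <| by
          nlinarith [Real.pi_gt_three, sq_nonneg (1 / 2 - s ^ 2 / 3)]
    _ = (1 / 2 - s ^ 2 / 3) * √(2 * π) := by
        rw [Real.sqrt_mul (by positivity), Real.sqrt_sq (by linarith), mul_comm]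

lemma setOf_signChange_eq_setOf_le_dotProduct {m n : Type*} [Fintype m] [Fintype n]
    (w x : n → ℝ) (b α : ℝ) (M : Matrix n m ℝ) :
    {g | (w ⬝ᵥ x + b) * (w ⬝ᵥ (x + α • M *ᵥ g) + b) ≤ 0}
      = {g | (w ⬝ᵥ x + b) ^ 2 ≤ (-((w ⬝ᵥ x + b) * α) • (Mᵀ *ᵥ w)) ⬝ᵥ g} := by
  ext g
  simp only [Set.mem_ofPred_eq, smul_dotProduct, smul_eq_mul, dotProduct_add, dotProduct_smul,
    dotProduct_mulVec, mulVec_transpose]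
  constructor <;> intro h <;> linarith

namespace Matrix

variable {n : Type*} [Fintype n] [DecidableEq n]

lemma transpose_cfcSqrt (S : Matrix n n ℝ) : (CFC.sqrt S)ᵀ = CFC.sqrt S := by
  rw [← conjTranspose_eq_transpose_of_trivial]
  exact (CFC.sqrt_nonneg S).posSemidef.isHermitian

lemma PosDef.cfcSqrt_mulVec_ne_zero {S : Matrix n n ℝ} (hS : S.PosDef) {w : n → ℝ}
    (hw : w ≠ 0) : CFC.sqrt S *ᵥ w ≠ 0 := by
  intro h
  have hpos := hS.dotProduct_mulVec_pos hw
  rw [← CFC.sqrt_mul_sqrt_self S hS.posSemidef.nonneg, ← mulVec_mulVec, h, mulVec_zero,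
    dotProduct_zero] at hpos
  exact lt_irrefl 0 hpos

end Matrix

/-- Gaussian-noise robustness, upper bound: for a linear classifier `f(z) = wᵀz + b` and
Gaussian noise `v = √Σ g` with `g` i.i.d. standard Gaussian, if
`|α| > √(1/(1-√(3ε))) · (‖w‖₂/‖√Σ w‖₂) · |f(x)|/‖w‖₂` then the probability that the
sign of `f` changes is `> ε`. -/
theorem gaussian_noise_robustness_upper (d : ℕ) (w : Fin d → ℝ) (hw : w ≠ 0) (b : ℝ)
    (x : Fin d → ℝ) (hfx : w ⬝ᵥ x + b ≠ 0) (ε : ℝ) (hε : ε ∈ Set.Ioo (0 : ℝ) (1 / 3))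
    (S : Matrix (Fin d) (Fin d) ℝ) (hS : S.PosDef) (α : ℝ)
    (hα : |α| > (1 / Real.sqrt (1 - Real.sqrt (3 * ε)))
        * (Real.sqrt (∑ i, w i ^ 2)
            / Real.sqrt (∑ i, ((CFC.sqrt S).mulVec w) i ^ 2))
        * (|w ⬝ᵥ x + b| / Real.sqrt (∑ i, w i ^ 2))) :
    ENNReal.ofReal ε
      < (Measure.pi fun _ : Fin d => gaussianReal 0 1)
          {g | (w ⬝ᵥ x + b) * (w ⬝ᵥ (x + α • (CFC.sqrt S).mulVec g) + b) ≤ 0} := by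
  obtain ⟨hε0, hε3⟩ := hε
  set c := w ⬝ᵥ x + b
  set u := CFC.sqrt S *ᵥ w
  set σ := √(∑ i, u i ^ 2)
  have hu : u ≠ 0 := hS.cfcSqrt_mulVec_ne_zero hw
  have hσ : 0 < σ := Real.sqrt_pos.2 (sum_sq_pos_of_ne_zero hu)
  have hW : 0 < √(∑ i, w i ^ 2) := Real.sqrt_pos.2 (sum_sq_pos_of_ne_zero hw)
  have hr : 0 < √(1 - √(3 * ε)) := by
    rw [Real.sqrt_pos, sub_pos, Real.sqrt_lt' one_pos]
    linarith
  have hαpos : 0 < |α| := lt_of_le_of_lt (by positivity) hα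
  have hratio : |c| / (|α| * σ) < √(1 - √(3 * ε)) := by
    rw [show 1 / √(1 - √(3 * ε)) * (√(∑ i, w i ^ 2) / σ) * (|c| / √(∑ i, w i ^ 2))
        = |c| / (√(1 - √(3 * ε)) * σ) by field_simp,
      gt_iff_lt, div_lt_iff₀ (by positivity)] at hα
    rw [div_lt_iff₀ (by positivity)]
    linarith
  have hk : -(c * α) • u ≠ 0 :=
    smul_ne_zero (neg_ne_zero.2 (mul_ne_zero hfx (abs_pos.1 hαpos))) hu
  rw [setOf_signChange_eq_setOf_le_dotProduct, transpose_cfcSqrt]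
  refine lt_of_lt_of_le ?_ (ofReal_sub_le_pi_gaussianReal_setOf_le_dotProduct hk (sq_nonneg c))
  rw [ENNReal.ofReal_lt_ofReal_iff_of_nonneg hε0.le, sqrt_sum_sq_smul]
  have hscale : c ^ 2 / (√(2 * π) * (|-(c * α)| * σ)) = |c| / (|α| * σ) / √(2 * π) := by
    rw [abs_neg, abs_mul, ← sq_abs]
    field_simp
  linarith [div_lt_div_of_pos_right hratio (by positivity : 0 < √(2 * π)),
    sqrt_one_sub_sqrt_three_mul_div_le hε0.le (by linarith)]
end

section
/- Let f(x) = wᵀx + b with w ≠ 0 and f(x) ≠ 0, let p ∈ [1, ∞], p' its Hölder conjugate, and let v be uniform on the unit ℓp ball of ℝᵈ. If E[(wᵀv)²] ≤ M² for some M > 0, then for any α ≠ 0, P(f(x)·f(x+αv) ≤ 0) ≤ (1/2)·M²·α² / (‖w‖_{p'}² · dist_p(x,H)²), where dist_p(x,H) = |f(x)|/‖w‖_{p'} is the ℓp-distance of x to the hyperplane H = {f = 0}. -/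
open MeasureTheory ProbabilityTheory Matrix Finset

/-- Markov-type upper bound on misclassification under uniform ℓp noise: for the linear
classifier `f(z) = wᵀz + b`, `v` uniform on the unit ℓp ball, and `E[(wᵀv)²] ≤ M²`,
`P(f(x)·f(x+αv) ≤ 0) ≤ ½·M²·α²/(‖w‖_{p'}²·dist_p(x,H)²)` where
`dist_p(x,H) = |f(x)|/‖w‖_{p'}`. -/
theorem uniform_lp_noise_markov_bound (d : ℕ) (p p' : ENNReal)
    [Fact (1 ≤ p)] [Fact (1 ≤ p')] (hpp' : 1 / p + 1 / p' = 1)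
    (w : Fin d → ℝ) (hw : w ≠ 0) (b : ℝ) (x : Fin d → ℝ)
    (hfx : w ⬝ᵥ x + b ≠ 0) (M α : ℝ) (hM : 0 < M) (hα : α ≠ 0) :
    ∀ B : Set (Fin d → ℝ), B = {v | ‖(WithLp.equiv p (Fin d → ℝ)).symm v‖ ≤ 1} →
    ∀ μ : Measure (Fin d → ℝ), μ = (volume B)⁻¹ • volume.restrict B →
    (∫ v, (w ⬝ᵥ v) ^ 2 ∂μ) ≤ M ^ 2 →
    μ {v | (w ⬝ᵥ x + b) * (w ⬝ᵥ (x + α • v) + b) ≤ 0}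
      ≤ ENNReal.ofReal ((1 / 2) * M ^ 2 * α ^ 2
          / (‖(WithLp.equiv p' (Fin d → ℝ)).symm w‖ ^ 2
              * (|w ⬝ᵥ x + b| / ‖(WithLp.equiv p' (Fin d → ℝ)).symm w‖) ^ 2)) := by
  intro B hB μ hμ hint
  set N := ‖(WithLp.equiv p' (Fin d → ℝ)).symm w‖ with hNdef
  have hN : 0 < N := by
    rw [hNdef, norm_pos_iff]
    simpa using hw
  set c := w ⬝ᵥ x + b with hcdef
  have hc2 : (0:ℝ) < c ^ 2 := by positivity
  -- RHS simplification
  have hRHS : N ^ 2 * (|c| / N) ^ 2 = c ^ 2 := by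
    rw [div_pow, sq_abs]; field_simp
  rw [hRHS]
  -- the dot product map
  set g : (Fin d → ℝ) → ℝ := fun v => w ⬝ᵥ v with hgdef
  have hgc : Continuous g := by
    rw [hgdef]; unfold dotProduct; fun_prop
  -- event rewriting
  have hEvent : {v : Fin d → ℝ | c * (w ⬝ᵥ (x + α • v) + b) ≤ 0}
      = {v : Fin d → ℝ | (α * c) * g v ≤ -c ^ 2} := by
    ext v
    simp only [Set.mem_setOf_eq, dotProduct_add, dotProduct_smul, smul_eq_mul, hgdef, hcdef]
    constructor <;> intro h <;> nlinarith
  rw [hEvent]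
  set E := {v : Fin d → ℝ | (α * c) * g v ≤ -c ^ 2} with hEdef
  set E' := {v : Fin d → ℝ | c ^ 2 ≤ (α * c) * g v} with hE'def
  have hEm : MeasurableSet E := measurableSet_le (continuous_const.mul hgc).measurable
    measurable_const
  have hE'm : MeasurableSet E' := measurableSet_le measurable_const
    (continuous_const.mul hgc).measurable
  -- degenerate case
  by_cases hB0 : volume B = 0
  · have : μ = 0 := by rw [hμ, Measure.restrict_eq_zero.2 hB0, smul_zero]
    simp [this]
  -- symmetry of B
  have hBsymm : Neg.neg ⁻¹' B = B := by
    ext v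
    simp [hB]
  -- symmetry of μ
  have hsym : ∀ A : Set (Fin d → ℝ), MeasurableSet A → μ (Neg.neg ⁻¹' A) = μ A := by
    intro A hA
    rw [hμ]
    simp only [Measure.smul_apply, smul_eq_mul,
      Measure.restrict_apply hA, Measure.restrict_apply (hA.preimage measurable_neg)]
    congr 1
    have : Neg.neg ⁻¹' A ∩ B = Neg.neg ⁻¹' (A ∩ B) := by
      rw [Set.preimage_inter, hBsymm]
    rw [this, Measure.measure_preimage_neg]
  -- E' is the negation of E
  have hnegE : Neg.neg ⁻¹' E = E' := by
    ext v
    simp only [hEdef, hE'def, Set.mem_preimage, Set.mem_setOf_eq, hgdef, dotProduct_neg]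
    constructor <;> intro h <;> nlinarith
  have hμEE' : μ E = μ E' := by rw [← hnegE, hsym E hEm]
  -- disjointness and union bound
  have hdisj : Disjoint E E' := by
    rw [Set.disjoint_left]
    intro v hv hv'
    simp only [hEdef, hE'def, Set.mem_setOf_eq] at hv hv'
    nlinarith
  set S := {v : Fin d → ℝ | ENNReal.ofReal (c ^ 2 / α ^ 2) ≤ ENNReal.ofReal (g v ^ 2)}
    with hSdef
  have hsub : E ∪ E' ⊆ S := by
    intro v hv
    have hα2 : (0:ℝ) < α ^ 2 := by positivity
    simp only [hSdef, Set.mem_setOf_eq]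
    rw [ENNReal.ofReal_le_ofReal_iff (sq_nonneg _)]
    rcases hv with hv | hv <;>
      · simp only [hEdef, hE'def, Set.mem_setOf_eq] at hv
        rw [div_le_iff₀ hα2]
        nlinarith
  -- compactness and integrability
  have hBcomp : IsCompact B := by
    have : B = (WithLp.equiv p (Fin d → ℝ)) '' (Metric.closedBall 0 1) := by
      rw [hB, ← Equiv.preimage_eq_iff_eq_image]
      ext y
      simp [Metric.mem_closedBall, dist_zero_right]
    rw [this]
    exact (isCompact_closedBall 0 1).image (PiLp.continuous_ofLp _ _)
  have hBfin : volume B ≠ ⊤ := hBcomp.measure_ne_top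
  have hintg : Integrable (fun v => g v ^ 2) μ := by
    rw [hμ]
    exact ((hgc.pow 2).continuousOn.integrableOn_compact hBcomp).smul_measure
      (by simp [hB0])
  -- Markov
  have hMarkov : ENNReal.ofReal (c ^ 2 / α ^ 2) * μ S ≤ ENNReal.ofReal (M ^ 2) := by
    calc ENNReal.ofReal (c ^ 2 / α ^ 2) * μ S
        ≤ ∫⁻ v, ENNReal.ofReal (g v ^ 2) ∂μ := by
          exact mul_meas_ge_le_lintegral ((ENNReal.measurable_ofReal.comp
            ((hgc.pow 2).measurable)) ) _
      _ = ENNReal.ofReal (∫ v, g v ^ 2 ∂μ) :=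
          (ofReal_integral_eq_lintegral_ofReal hintg
            (Filter.Eventually.of_forall fun v => sq_nonneg _)).symm
      _ ≤ ENNReal.ofReal (M ^ 2) := ENNReal.ofReal_le_ofReal hint
  have ht0 : (0:ℝ) < c ^ 2 / α ^ 2 := by positivity
  have htne : ENNReal.ofReal (c ^ 2 / α ^ 2) ≠ 0 := by
    simp [ENNReal.ofReal_eq_zero, not_le, ht0]
  have htnetop : ENNReal.ofReal (c ^ 2 / α ^ 2) ≠ ⊤ := ENNReal.ofReal_ne_top
  have hμS : μ S ≤ ENNReal.ofReal (M ^ 2) / ENNReal.ofReal (c ^ 2 / α ^ 2) :=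
    (ENNReal.le_div_iff_mul_le (Or.inl htne) (Or.inl htnetop)).2
      (by rwa [mul_comm] at hMarkov)
  -- combine
  have h2 : 2 * μ E ≤ μ S := by
    have : μ E + μ E' = μ (E ∪ E') := (measure_union hdisj hE'm).symm
    calc 2 * μ E = μ E + μ E' := by rw [← hμEE', two_mul]
      _ = μ (E ∪ E') := this
      _ ≤ μ S := measure_mono hsub
  have hfinal : μ E ≤ ENNReal.ofReal (M ^ 2) / ENNReal.ofReal (c ^ 2 / α ^ 2) / 2 := by
    rw [ENNReal.le_div_iff_mul_le (Or.inl two_ne_zero) (Or.inl (by norm_num))]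
    rw [mul_comm]
    exact le_trans h2 hμS
  refine hfinal.trans (le_of_eq ?_)
  rw [← ENNReal.ofReal_div_of_pos ht0]
  rw [show (2 : ENNReal) = ENNReal.ofReal 2 by norm_num]
  rw [← ENNReal.ofReal_div_of_pos (by norm_num : (0:ℝ) < 2)]
  congr 1
  field_simp
end

section
/- Let f(x) = wᵀx + b with w ≠ 0 and f(x) ≠ 0, let v be a random vector with E[wᵀv] = 0, Var(wᵀv) = σ² > 0, and E[(wᵀv)⁴] = m₄ < ∞, and suppose v and -v have the same distribution. If |α| > ‖w‖_{p'}·dist_p(x,H) / √(σ² - √(2ε·m₄)) for some ε with 2ε·m₄ < σ⁴, then P(f(x)·f(x+αv) ≤ 0) > ε. -/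
/-!
Write `Y = wᵀv` and `c = f(x)`, so that `f(x + αv) = c + αY`. Whenever `α²Y² ≥ c²`, one of
`c(c + αY)` and `c(c - αY)` is nonpositive, so by the symmetry of `v` the misclassification
probability is at least half of `P(Y² ≥ c²/α²)`. Paley–Zygmund for `Y²` (mean `σ²`, second moment
`m₄`) bounds this from below by `(σ² - c²/α²)²/m₄`, and the hypothesis on `|α|` guarantees that this
exceeds `2ε`.
-/

open MeasureTheory ProbabilityTheory Matrix Finset

theorem mul_add_nonpos_or_mul_sub_nonpos_of_sq_le_sq {c t : ℝ} (h : c ^ 2 ≤ t ^ 2) :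
    c * (c + t) ≤ 0 ∨ c * (c - t) ≤ 0 := by
  by_contra! hpos
  nlinarith [mul_pos hpos.1 hpos.2]

theorem sum_abs_rpow_pos {ι : Type*} [Fintype ι] {w : ι → ℝ} (hw : w ≠ 0) (p : ℝ) :
    0 < ∑ i, |w i| ^ p := by
  obtain ⟨i, hi⟩ := Function.ne_iff.1 hw
  exact Finset.sum_pos' (fun j _ => Real.rpow_nonneg (abs_nonneg _) _)
    ⟨i, Finset.mem_univ i, Real.rpow_pos_of_pos (abs_pos.2 hi) _⟩

theorem sq_div_sq_lt_of_abs_div_sqrt_lt {a b t : ℝ} (h : |a| / √t < |b|) (ht : 0 < t) :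
    a ^ 2 / b ^ 2 < t := by
  have hb : 0 < |b| := (div_nonneg (abs_nonneg a) (Real.sqrt_nonneg t)).trans_lt h
  rw [div_lt_iff₀ (Real.sqrt_pos.2 ht)] at h
  rw [← sq_abs a, ← sq_abs b, div_lt_iff₀ (pow_pos hb 2)]
  calc |a| ^ 2 < (|b| * √t) ^ 2 := pow_lt_pow_left₀ h (abs_nonneg a) two_ne_zero
    _ = t * |b| ^ 2 := by rw [mul_pow, Real.sq_sqrt ht.le, mul_comm]

section

variable {Ω : Type*} {m : MeasurableSpace Ω} {μ : Measure Ω}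

theorem setIntegral_le_sqrt_integral_sq_mul_sqrt_measureReal [IsFiniteMeasure μ] {f : Ω → ℝ}
    (hf₀ : 0 ≤ f) (hf : MemLp f 2 μ) (s : Set Ω) :
    ∫ ω in s, f ω ∂μ ≤ √(∫ ω, f ω ^ 2 ∂μ) * √(μ.real s) := by
  have hholder := integral_mul_le_Lp_mul_Lq_of_nonneg (μ := μ.restrict s)
    Real.HolderConjugate.two_two (f := f) (g := fun _ => 1) (ae_of_all _ hf₀)
    (ae_of_all _ fun _ => zero_le_one) (by simpa using hf.restrict s) (by simpa using memLp_const 1)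
  simp only [mul_one, Real.rpow_ofNat, one_pow, integral_const, MeasurableSet.univ,
    measureReal_restrict_apply, Set.univ_inter, smul_eq_mul, ← Real.sqrt_eq_rpow] at hholder
  refine hholder.trans (mul_le_mul_of_nonneg_right (Real.sqrt_le_sqrt ?_) (Real.sqrt_nonneg _))
  exact setIntegral_le_integral hf.integrable_sq (ae_of_all _ fun _ => sq_nonneg _)

theorem sq_integral_sub_le_integral_sq_mul_measureReal_le [IsProbabilityMeasure μ] {Z : Ω → ℝ}
    (hZ₀ : 0 ≤ Z) (hZ : MemLp Z 2 μ) {θ : ℝ} (hθ : 0 ≤ θ) (hθZ : θ ≤ ∫ ω, Z ω ∂μ) :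
    (∫ ω, Z ω ∂μ - θ) ^ 2 ≤ (∫ ω, Z ω ^ 2 ∂μ) * μ.real {ω | θ ≤ Z ω} := by
  set A := {ω | θ ≤ Z ω}
  have hA : NullMeasurableSet A μ := nullMeasurableSet_le aemeasurable_const hZ.aemeasurable
  have hZint : Integrable Z μ := hZ.integrable one_le_two
  have hsmall : ∫ ω in Aᶜ, Z ω ∂μ ≤ θ :=
    calc ∫ ω in Aᶜ, Z ω ∂μ ≤ ∫ _ in Aᶜ, θ ∂μ :=
          setIntegral_mono_ae_restrict hZint.integrableOn (integrable_const θ).integrableOn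
            (by filter_upwards [ae_restrict_mem₀ hA.compl] with ω hω using le_of_lt (not_le.mp hω))
      _ ≤ ∫ _, θ ∂μ := setIntegral_le_integral (integrable_const θ) (ae_of_all _ fun _ => hθ)
      _ = θ := by simp
  have hlarge := setIntegral_le_sqrt_integral_sq_mul_sqrt_measureReal hZ₀ hZ A
  have hsplit := integral_add_compl₀ hA hZint
  calc (∫ ω, Z ω ∂μ - θ) ^ 2 ≤ (√(∫ ω, Z ω ^ 2 ∂μ) * √(μ.real A)) ^ 2 :=
        pow_le_pow_left₀ (sub_nonneg.2 hθZ) (by linarith) 2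
    _ = (∫ ω, Z ω ^ 2 ∂μ) * μ.real A := by
        rw [mul_pow, Real.sq_sqrt (integral_nonneg fun _ => sq_nonneg _),
          Real.sq_sqrt measureReal_nonneg]

theorem lt_measureReal_le_of_add_sqrt_lt_integral [IsProbabilityMeasure μ] {Z : Ω → ℝ}
    (hZ₀ : 0 ≤ Z) (hZ : MemLp Z 2 μ) {θ t : ℝ} (hθ : 0 ≤ θ)
    (h : θ + √(t * ∫ ω, Z ω ^ 2 ∂μ) < ∫ ω, Z ω ∂μ) :
    t < μ.real {ω | θ ≤ Z ω} := by
  have hsqrt := Real.sqrt_nonneg (t * ∫ ω, Z ω ^ 2 ∂μ)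
  have hPZ := sq_integral_sub_le_integral_sq_mul_measureReal_le hZ₀ hZ hθ (by linarith)
  have hlt := (Real.sqrt_lt' (by linarith)).1 (lt_sub_iff_add_lt'.2 h)
  exact lt_of_mul_lt_mul_left (by linarith) (integral_nonneg fun _ => sq_nonneg _)

theorem map_comp_eq_map_neg_comp {E F : Type*} [MeasurableSpace E] [MeasurableSpace F] [Neg E]
    [MeasurableNeg E] [Neg F] {v : Ω → E} (hv : Measurable v)
    (hsymm : μ.map v = μ.map (fun ω => -v ω)) {g : E → F} (hg : Measurable g)
    (hg_neg : ∀ y, g (-y) = -g y) :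
    μ.map (fun ω => g (v ω)) = μ.map (fun ω => -g (v ω)) := by
  have h := congrArg (Measure.map g) hsymm
  rwa [Measure.map_map hg hv, Measure.map_map (f := fun ω => -v ω) hg hv.neg, Function.comp_def,
    Function.comp_def, funext fun ω => hg_neg (v ω)] at h

theorem measureReal_le_two_mul_measureReal_mul_add_nonpos [IsFiniteMeasure μ] {Y : Ω → ℝ}
    (hY : Measurable Y) (hsymm : μ.map Y = μ.map (fun ω => -Y ω)) {c α θ : ℝ}
    (h : c ^ 2 ≤ α ^ 2 * θ) :
    μ.real {ω | θ ≤ Y ω ^ 2} ≤ 2 * μ.real {ω | c * (c + α * Y ω) ≤ 0} := by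
  set S : Set ℝ := {y | c * (c + α * y) ≤ 0}
  have hS : MeasurableSet S := measurableSet_le (by fun_prop) measurable_const
  have hneg : μ.real ((fun ω => -Y ω) ⁻¹' S) = μ.real (Y ⁻¹' S) := by
    simp only [measureReal_def]
    rw [← Measure.map_apply (f := fun ω => -Y ω) hY.neg hS, ← hsymm, Measure.map_apply hY hS]
  have hcover : {ω | θ ≤ Y ω ^ 2} ⊆ Y ⁻¹' S ∪ (fun ω => -Y ω) ⁻¹' S := by
    intro ω hω
    have hsq : c ^ 2 ≤ (α * Y ω) ^ 2 := by
      rw [mul_pow]; exact h.trans (mul_le_mul_of_nonneg_left hω (sq_nonneg α))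
    simpa [S, ← sub_eq_add_neg] using mul_add_nonpos_or_mul_sub_nonpos_of_sq_le_sq hsq
  calc μ.real {ω | θ ≤ Y ω ^ 2} ≤ μ.real (Y ⁻¹' S ∪ (fun ω => -Y ω) ⁻¹' S) :=
        measureReal_mono hcover
    _ ≤ μ.real (Y ⁻¹' S) + μ.real ((fun ω => -Y ω) ⁻¹' S) := measureReal_union_le _ _
    _ = 2 * μ.real (Y ⁻¹' S) := by rw [hneg, two_mul]

end

theorem symmetric_noise_paley_zygmund_bound_general {Ω : Type*} [MeasureSpace Ω]
    [IsProbabilityMeasure (ℙ : Measure Ω)] (d : ℕ)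
    (w : Fin d → ℝ) (hw : w ≠ 0) (b : ℝ) (x : Fin d → ℝ)
    (v : Ω → Fin d → ℝ) (hv : Measurable v)
    (hsymm : Measure.map v ℙ = Measure.map (fun ω => -v ω) ℙ)
    (σ m₄ : ℝ) (hσ : 0 < σ)
    (hvar : (∫ ω, (w ⬝ᵥ v ω) ^ 2) = σ ^ 2)
    (hint4 : Integrable (fun ω => (w ⬝ᵥ v ω) ^ 4))
    (hm4 : (∫ ω, (w ⬝ᵥ v ω) ^ 4) = m₄)
    (ε : ℝ) (hε : 0 ≤ ε) (hεm : 2 * ε * m₄ < σ ^ 4)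
    (p' : ℝ) (α : ℝ)
    (hα : |α| > ((∑ i, |w i| ^ p') ^ (1 / p')
          * (|w ⬝ᵥ x + b| / (∑ i, |w i| ^ p') ^ (1 / p')))
        / Real.sqrt (σ ^ 2 - Real.sqrt (2 * ε * m₄))) :
    ENNReal.ofReal ε < ℙ {ω | (w ⬝ᵥ x + b) * (w ⬝ᵥ (x + α • v ω) + b) ≤ 0} := by
  set c := w ⬝ᵥ x + b
  set Y : Ω → ℝ := fun ω => w ⬝ᵥ v ω
  have hdot : Measurable fun y : Fin d → ℝ => w ⬝ᵥ y := by fun_prop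
  rw [mul_div_cancel₀ _ (Real.rpow_pos_of_pos (sum_abs_rpow_pos hw p') _).ne'] at hα
  have hα₀ : α ≠ 0 := abs_pos.1 (lt_of_le_of_lt (by positivity) hα)
  have hs : √(2 * ε * m₄) < σ ^ 2 := (Real.sqrt_lt' (by positivity)).2 (by linarith)
  set θ := c ^ 2 / α ^ 2
  have hθ : θ + √(2 * ε * m₄) < σ ^ 2 :=
    lt_sub_iff_add_lt.1 (sq_div_sq_lt_of_abs_div_sqrt_lt hα (sub_pos.2 hs))
  have hZ : MemLp (fun ω => Y ω ^ 2) 2 ℙ :=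
    (memLp_two_iff_integrable_sq (by fun_prop)).2 (by simpa only [← pow_mul] using hint4)
  have hm4' : ∫ ω, (Y ω ^ 2) ^ 2 = m₄ := by simpa only [← pow_mul] using hm4
  have hP : 2 * ε < (ℙ : Measure Ω).real {ω | θ ≤ Y ω ^ 2} :=
    lt_measureReal_le_of_add_sqrt_lt_integral (fun ω => sq_nonneg (Y ω)) hZ (by positivity)
      (by rwa [hm4', hvar])
  have hPE := measureReal_le_two_mul_measureReal_mul_add_nonpos (Y := Y) (hdot.comp hv)
    (map_comp_eq_map_neg_comp hv hsymm hdot (dotProduct_neg w)) (c := c) (α := α) (θ := θ)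
    (by rw [mul_div_cancel₀ _ (pow_ne_zero 2 hα₀)])
  have hevent : {ω | c * (w ⬝ᵥ (x + α • v ω) + b) ≤ 0} = {ω | c * (c + α * Y ω) ≤ 0} := by
    ext ω
    simp only [Set.mem_ofPred_eq, dotProduct_add, dotProduct_smul, smul_eq_mul, c, Y]
    ring_nf
  rw [hevent, ENNReal.ofReal_lt_iff_lt_toReal hε (measure_ne_top _ _), ← measureReal_def]
  linarith

/-- Paley–Zygmund lower bound on misclassification: for the linear classifier
`f(z) = wᵀz + b` and a symmetric random vector `v` with `E[wᵀv] = 0`, `Var(wᵀv) = σ² > 0`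
and `E[(wᵀv)⁴] = m₄`, if `2ε·m₄ < σ⁴` and
`|α| > ‖w‖_{p'}·dist_p(x,H)/√(σ² - √(2ε·m₄))` (with `dist_p(x,H) = |f(x)|/‖w‖_{p'}`),
then `P(f(x)·f(x+αv) ≤ 0) > ε`. -/
theorem symmetric_noise_paley_zygmund_bound {Ω : Type*} [MeasureSpace Ω]
    [IsProbabilityMeasure (ℙ : Measure Ω)] (d : ℕ)
    (w : Fin d → ℝ) (hw : w ≠ 0) (b : ℝ) (x : Fin d → ℝ) (hfx : w ⬝ᵥ x + b ≠ 0)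
    (v : Ω → Fin d → ℝ) (hv : Measurable v)
    (hsymm : Measure.map v ℙ = Measure.map (fun ω => -v ω) ℙ)
    (σ m₄ : ℝ) (hσ : 0 < σ)
    (hint1 : Integrable (fun ω => w ⬝ᵥ v ω)) (hmean : (∫ ω, w ⬝ᵥ v ω) = 0)
    (hint2 : Integrable (fun ω => (w ⬝ᵥ v ω) ^ 2))
    (hvar : (∫ ω, (w ⬝ᵥ v ω) ^ 2) = σ ^ 2)
    (hint4 : Integrable (fun ω => (w ⬝ᵥ v ω) ^ 4))
    (hm4 : (∫ ω, (w ⬝ᵥ v ω) ^ 4) = m₄)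
    (ε : ℝ) (hε : 0 ≤ ε) (hεm : 2 * ε * m₄ < σ ^ 4)
    (p' : ℝ) (hp' : 1 ≤ p') (α : ℝ)
    (hα : |α| > ((∑ i, |w i| ^ p') ^ (1 / p')
          * (|w ⬝ᵥ x + b| / (∑ i, |w i| ^ p') ^ (1 / p')))
        / Real.sqrt (σ ^ 2 - Real.sqrt (2 * ε * m₄))) :
    ENNReal.ofReal ε < ℙ {ω | (w ⬝ᵥ x + b) * (w ⬝ᵥ (x + α • v ω) + b) ≤ 0} :=
  symmetric_noise_paley_zygmund_bound_general d w hw b x v hv hsymm σ m₄ hσ hvar hint4 hm4 ε hε hεm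
    p' α hα
end
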